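/- arXiv:0806.4919 — 4 statements merged into one kernel-verified Lean document; each statement's English description precedes it below -/
import Mathlib

section
/- Let $T(j)$, $B(j)$ be real $2\times 2$ matrices and $(a(j))_{j\ge 1}$ real $2\times 1$ vectors with $a(j+1)=T(j)a(j)$ for all $j$, $a(j)\to 0$ as $j\to\infty$, and $\sum_{j=1}^\infty \|B(j)a(j)\|^2<\infty$. Suppose there is a real symmetric $2\times 2$ matrix $C$ with eigenvalues $0$ and $\lambda<0$ such that $(T(n)^t J T(m)-J)/(m-n)=B(n)^t C B(m)$ for all $m\ne n$, where $J=\begin{pmatrix}0&-1\\1&0\end{pmatrix}$. Define $\phi(j)=|\lambda|^{1/2}\langle v_\lambda, B(j)a(j)\rangle$, where $v_\lambda$ is a real unit eigenvector of $C$ for $\lambda$. Then for all $m\ne n$, $\frac{\langle Ja(m),a(n)\rangle}{m-n}=\sum_{k=1}^\infty \phi(m+k-1)\phi(n+k-1)$. -/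
/-!
Put `F k = ⟨J a(m+k), a(n+k)⟩ / (m - n)`. Applying the Tracy–Widom relation for the pair
`(m+k, n+k)` to `a(m+k)`, `a(n+k)` and using `a(j+1) = T(j) a(j)` gives
`F k - F (k+1) = -⟨C B(m+k) a(m+k), B(n+k) a(n+k)⟩`. A symmetric `2 × 2` matrix with eigenvalues
`λ` and `0` is `λ v vᵀ`, so this increment is `φ(m+k) φ(n+k)`. Since `φ ∈ ℓ²` the series converges
absolutely, and since `a(j) → 0` we have `F k → 0`; so the series telescopes to `F 0`.
-/

open Matrix Filter Topology

namespace Matrix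

variable {n K : Type*} [Fintype n]

theorem transpose_mul_mul_mulVec_dotProduct [CommSemiring K] (M P Q : Matrix n n K)
    (x y : n → K) : ((Qᵀ * M * P) *ᵥ x) ⬝ᵥ y = (M *ᵥ (P *ᵥ x)) ⬝ᵥ (Q *ᵥ y) := by
  rw [← mulVec_mulVec, ← mulVec_mulVec, dotProduct_comm, dotProduct_mulVec, vecMul_transpose,
    dotProduct_comm]

theorem IsSymm.mulVec_dotProduct_comm [CommSemiring K] {C : Matrix n n K} (hC : C.IsSymm)
    (v w : n → K) : (C *ᵥ v) ⬝ᵥ w = v ⬝ᵥ (C *ᵥ w) := by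
  rw [dotProduct_mulVec, ← vecMul_transpose, hC.eq]

theorem IsSymm.dotProduct_eq_zero_of_mulVec_eq_smul [Field K] {C : Matrix n n K}
    (hC : C.IsSymm) {lam mu : K} (hne : lam ≠ mu) {v w : n → K} (hv : C *ᵥ v = lam • v)
    (hw : C *ᵥ w = mu • w) : v ⬝ᵥ w = 0 := by
  have h : lam * (v ⬝ᵥ w) = mu * (v ⬝ᵥ w) := by
    rw [← smul_eq_mul, ← smul_dotProduct, ← hv, hC.mulVec_dotProduct_comm, hw, dotProduct_smul,
      smul_eq_mul]
  exact (mul_eq_mul_right_iff.1 h).resolve_left hne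

theorem IsSymm.eq_smul_vecMulVec_of_fin_two [Field K] {C : Matrix (Fin 2) (Fin 2) K}
    (hC : C.IsSymm) {lam : K} (hlam : lam ≠ 0) {v w : Fin 2 → K} (hv : C *ᵥ v = lam • v)
    (hvv : v ⬝ᵥ v = 1) (hw0 : w ≠ 0) (hw : C *ᵥ w = 0) : C = lam • vecMulVec v v := by
  have hvw : v ⬝ᵥ w = 0 := hC.dotProduct_eq_zero_of_mulVec_eq_smul hlam hv (by rw [hw, zero_smul])
  have hind : LinearIndependent K ![v, w] := LinearIndependent.pair_iff.2 fun s t hst => by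
    have hs : s = 0 := by simpa [hvv, hvw] using congrArg (v ⬝ᵥ ·) hst
    subst hs
    exact ⟨rfl, (smul_eq_zero.1 (by simpa using hst)).resolve_right hw0⟩
  have hspan := hind.span_eq_top_of_card_eq_finrank (by simp)
  refine toLin'.injective (LinearMap.ext_on_range hspan fun i => ?_)
  fin_cases i <;> simp [hv, hw, vecMulVec_mulVec, hvv, hvw]

theorem mulVec_dotProduct_mulVec_sub_of_smul_sub_eq [Field K] {J T T' B B' C : Matrix n n K}
    {d : K} (hd : d ≠ 0) (h : (1 / d) • (T'ᵀ * J * T - J) = B'ᵀ * C * B) (x y : n → K) :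
    (J *ᵥ (T *ᵥ x)) ⬝ᵥ (T' *ᵥ y) - (J *ᵥ x) ⬝ᵥ y = d * ((C *ᵥ (B *ᵥ x)) ⬝ᵥ (B' *ᵥ y)) := by
  have h' : T'ᵀ * J * T - J = d • (B'ᵀ * C * B) := by
    rw [← h, smul_smul, mul_one_div_cancel hd, one_smul]
  simpa only [sub_mulVec, sub_dotProduct, smul_mulVec, smul_dotProduct, smul_eq_mul,
    transpose_mul_mul_mulVec_dotProduct] using congrArg (fun M => (M *ᵥ x) ⬝ᵥ y) h'

theorem mulVec_dotProduct_sub_div_of_smul_sub_eq_vecMulVec [Field K]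
    {J T T' B B' : Matrix n n K} {lam d : K} {v : n → K} (hd : d ≠ 0)
    (h : (1 / d) • (T'ᵀ * J * T - J) = B'ᵀ * (lam • vecMulVec v v) * B) (x y : n → K) :
    ((J *ᵥ x) ⬝ᵥ y - (J *ᵥ (T *ᵥ x)) ⬝ᵥ (T' *ᵥ y)) / d = -lam * (v ⬝ᵥ B *ᵥ x) * (v ⬝ᵥ B' *ᵥ y) := by
  rw [← neg_sub, mulVec_dotProduct_mulVec_sub_of_smul_sub_eq hd h]
  simp only [smul_mulVec, vecMulVec_mulVec, op_smul_eq_smul, smul_dotProduct, smul_eq_mul]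
  field_simp

theorem sq_dotProduct_le [CommSemiring K] [LinearOrder K] [IsStrictOrderedRing K]
    [ExistsAddOfLE K] (v w : n → K) : (v ⬝ᵥ w) ^ 2 ≤ (v ⬝ᵥ v) * (w ⬝ᵥ w) := by
  simpa only [dotProduct, sq] using Finset.sum_mul_sq_le_sq_mul_sq Finset.univ v w

theorem summable_sq_dotProduct_of_dotProduct_self_eq_one {ι : Type*} {v : n → ℝ}
    (hv : v ⬝ᵥ v = 1) {u : ι → n → ℝ} (hu : Summable fun i => u i ⬝ᵥ u i) :
    Summable fun i => (v ⬝ᵥ u i) ^ 2 :=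
  hu.of_nonneg_of_le (fun _ => sq_nonneg _) fun i => by
    simpa [hv] using sq_dotProduct_le v (u i)

theorem tendsto_mulVec_dotProduct_zero {ι : Type*} [CommSemiring K] [TopologicalSpace K]
    [IsTopologicalSemiring K] (J : Matrix n n K) {l : Filter ι} {x y : ι → n → K}
    (hx : Tendsto x l (𝓝 0)) (hy : Tendsto y l (𝓝 0)) :
    Tendsto (fun i => (J *ᵥ x i) ⬝ᵥ y i) l (𝓝 0) := by
  have hcont : Continuous fun p : (n → K) × (n → K) => (J *ᵥ p.1) ⬝ᵥ p.2 :=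
    (continuous_const.matrix_mulVec continuous_fst).dotProduct continuous_snd
  simpa [Function.comp_def] using (hcont.tendsto (0, 0)).comp (hx.prodMk_nhds hy)

end Matrix

theorem summable_mul_of_summable_sq {ι : Type*} {f g : ι → ℝ} (hf : Summable fun i => f i ^ 2)
    (hg : Summable fun i => g i ^ 2) : Summable fun i => f i * g i :=
  Summable.of_norm_bounded ((hf.add hg).div_const 2) fun i => by
    rw [Real.norm_eq_abs, abs_mul]
    nlinarith [two_mul_le_add_sq |f i| |g i|, sq_abs (f i), sq_abs (g i)]

theorem HasSum.of_sub_succ_of_tendsto_zero {G : Type*} [AddCommGroup G] [TopologicalSpace G]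
    [IsTopologicalAddGroup G] [T2Space G] {f g : ℕ → G} (hg : Summable g)
    (hf : Tendsto f atTop (𝓝 0)) (h : ∀ k, f k - f (k + 1) = g k) : HasSum g (f 0) := by
  rw [hg.hasSum_iff_tendsto_nat]
  simp_rw [← h, Finset.sum_range_sub']
  simpa using tendsto_const_nhds.sub hf

theorem discrete_tracy_widom_hankel_square_general
    (T B : ℕ → Matrix (Fin 2) (Fin 2) ℝ) (a : ℕ → Fin 2 → ℝ)
    (C : Matrix (Fin 2) (Fin 2) ℝ) (lam : ℝ) (v : Fin 2 → ℝ)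
    (J : Matrix (Fin 2) (Fin 2) ℝ)
    (hrec : ∀ j, 1 ≤ j → a (j + 1) = T j *ᵥ a j)
    (hdecay : Tendsto a atTop (nhds 0))
    (hsum : Summable (fun j => (B j *ᵥ a j) ⬝ᵥ (B j *ᵥ a j)))
    (hCsymm : C.IsSymm) (hlam : lam < 0)
    (hv : C *ᵥ v = lam • v) (hvunit : v ⬝ᵥ v = 1)
    (hker : ∃ w : Fin 2 → ℝ, w ≠ 0 ∧ C *ᵥ w = 0)
    (hTW : ∀ m n : ℕ, 1 ≤ m → 1 ≤ n → m ≠ n →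
      (1 / ((m : ℝ) - n)) • ((T n)ᵀ * J * T m - J) = (B n)ᵀ * C * B m)
    (phi : ℕ → ℝ)
    (hphi : ∀ j, phi j = Real.sqrt |lam| * (v ⬝ᵥ (B j *ᵥ a j))) :
    ∀ m n : ℕ, 1 ≤ m → 1 ≤ n → m ≠ n →
      ((J *ᵥ a m) ⬝ᵥ a n) / ((m : ℝ) - n) =
        ∑' k : ℕ, phi (m + k) * phi (n + k) := by
  obtain ⟨w, hw0, hw⟩ := hker
  have hC := hCsymm.eq_smul_vecMulVec_of_fin_two hlam.ne hv hvunit hw0 hw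
  have hsqrt : √|lam| ^ 2 = -lam := by
    rw [Real.sq_sqrt (abs_nonneg lam), abs_of_neg hlam]
  have hphi_sq : Summable fun j => phi j ^ 2 := by
    simpa only [hphi, mul_pow] using
      (summable_sq_dotProduct_of_dotProduct_self_eq_one hvunit hsum).mul_left (√|lam| ^ 2)
  have hphi_sq_shift (i : ℕ) : Summable fun k => phi (i + k) ^ 2 := by
    simpa only [add_comm] using (summable_nat_add_iff i).2 hphi_sq
  have ha_shift (i : ℕ) : Tendsto (fun k => a (i + k)) atTop (𝓝 0) := by
    simpa only [add_comm] using (tendsto_add_atTop_iff_nat i).2 hdecay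
  intro m n hm hn hmn
  have hd : (m : ℝ) - n ≠ 0 := sub_ne_zero.2 (by exact_mod_cast hmn)
  set F : ℕ → ℝ := fun k => (J *ᵥ a (m + k)) ⬝ᵥ a (n + k) / ((m : ℝ) - n) with hF
  have hF_lim : Tendsto F atTop (𝓝 0) := by
    have h := (tendsto_mulVec_dotProduct_zero J (ha_shift m) (ha_shift n)).div_const ((m : ℝ) - n)
    rwa [zero_div] at h
  have hF_step (k : ℕ) : F k - F (k + 1) = phi (m + k) * phi (n + k) := by
    have hTWk := hTW (m + k) (n + k) (by omega) (by omega) (by omega)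
    rw [show ((m + k : ℕ) : ℝ) - (n + k : ℕ) = m - n by push_cast; ring, hC] at hTWk
    rw [hF, ← sub_div, ← add_assoc, ← add_assoc, hrec _ (by omega), hrec _ (by omega),
      mulVec_dotProduct_sub_div_of_smul_sub_eq_vecMulVec hd hTWk, hphi, hphi, ← hsqrt]
    ring
  have hsum_F := HasSum.of_sub_succ_of_tendsto_zero
    (summable_mul_of_summable_sq (hphi_sq_shift m) (hphi_sq_shift n)) hF_lim hF_step
  simpa [hF] using hsum_F.tsum_eq.symm

/-- Theorem 2.1: a discrete Tracy–Widom kernel factors as the square of a Hankel matrix. -/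
theorem discrete_tracy_widom_hankel_square
    (T B : ℕ → Matrix (Fin 2) (Fin 2) ℝ) (a : ℕ → Fin 2 → ℝ)
    (C : Matrix (Fin 2) (Fin 2) ℝ) (lam : ℝ) (v : Fin 2 → ℝ)
    (J : Matrix (Fin 2) (Fin 2) ℝ) (hJ : J = !![0, -1; 1, 0])
    (hrec : ∀ j, 1 ≤ j → a (j + 1) = T j *ᵥ a j)
    (hdecay : Tendsto a atTop (nhds 0))
    (hsum : Summable (fun j => (B j *ᵥ a j) ⬝ᵥ (B j *ᵥ a j)))
    (hCsymm : C.IsSymm) (hlam : lam < 0)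
    (hv : C *ᵥ v = lam • v) (hvunit : v ⬝ᵥ v = 1)
    (hker : ∃ w : Fin 2 → ℝ, w ≠ 0 ∧ C *ᵥ w = 0)
    (hTW : ∀ m n : ℕ, 1 ≤ m → 1 ≤ n → m ≠ n →
      (1 / ((m : ℝ) - n)) • ((T n)ᵀ * J * T m - J) = (B n)ᵀ * C * B m)
    (phi : ℕ → ℝ)
    (hphi : ∀ j, phi j = Real.sqrt |lam| * (v ⬝ᵥ (B j *ᵥ a j))) :
    ∀ m n : ℕ, 1 ≤ m → 1 ≤ n → m ≠ n →
      ((J *ᵥ a m) ⬝ᵥ a n) / ((m : ℝ) - n) =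
        ∑' k : ℕ, phi (m + k) * phi (n + k) :=
  discrete_tracy_widom_hankel_square_general T B a C lam v J hrec hdecay hsum hCsymm hlam hv hvunit
    hker hTW phi hphi
end

section
/- Let $\theta\in\mathbb{R}$ and define $p_0(\theta)=1$, $p_1(\theta)=\theta$, and $p_{n+1}(\theta)=\frac{\theta}{n+1}p_n(\theta)-p_{n-1}(\theta)$. Then the generating function $f(z)=\sum_{j=0}^\infty p_j(\theta)z^j$ satisfies the differential equation $(1+z^2)f'(z)+(2z-\theta)f(z)=0$ with $f(0)=1$, on a neighborhood of $0$. -/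
/-!
The generating function has coefficients bounded by `(1 + |θ|) ^ n`, so it is analytic on the
ball of radius `(1 + |θ|)⁻¹` and may be differentiated termwise. Multiplying the recurrence by
`n + 1` gives `(n + 2) p (n + 2) = θ p (n + 1) - (n + 2) p n`, which is the coefficient of
`z ^ (n + 1)` in `f' = θ f - z (z f' + 2 f)`; the constant coefficient is `p 1 = θ p 0`.
-/

open FormalMultilinearSeries

namespace FormalMultilinearSeries

variable {𝕜 : Type*} [NontriviallyNormedField 𝕜] {a : ℕ → 𝕜} {z : 𝕜}

theorem ofScalars_sum_eq_tsum_mul_pow (a : ℕ → 𝕜) :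
    (ofScalars 𝕜 a).sum = fun w => ∑' n, a n * w ^ n :=
  ofScalarsSum_eq_tsum a

theorem enorm_lt_ofScalars_radius_of_norm_le_pow {B : ℝ} (hB : 0 < B) (ha : ∀ n, ‖a n‖ ≤ B ^ n)
    (hz : ‖z‖ < B⁻¹) : ‖z‖ₑ < (ofScalars 𝕜 a).radius := by
  have hr : ((B⁻¹).toNNReal : ENNReal) ≤ (ofScalars 𝕜 a).radius := by
    refine le_radius_of_bound _ 1 fun n => ?_
    rw [ofScalars_norm, Real.coe_toNNReal _ (by positivity), inv_pow]
    exact mul_inv_le_one_of_le₀ (ha n) (by positivity)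
  refine lt_of_lt_of_le ?_ hr
  rw [← ofReal_norm]
  exact (ENNReal.ofReal_lt_ofReal_iff (by positivity)).mpr hz

variable [CompleteSpace 𝕜]

theorem hasSum_mul_pow_of_lt_radius (hz : ‖z‖ₑ < (ofScalars 𝕜 a).radius) :
    HasSum (fun n => a n * z ^ n) (∑' n, a n * z ^ n) := by
  simpa only [ofScalars_apply_eq, smul_eq_mul, ofScalars_sum_eq_tsum_mul_pow]
    using (ofScalars 𝕜 a).hasSum (x := z) (by simpa using hz)

theorem differentiableAt_tsum_mul_pow_of_lt_radius (hz : ‖z‖ₑ < (ofScalars 𝕜 a).radius) :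
    DifferentiableAt 𝕜 (fun w => ∑' n, a n * w ^ n) z := by
  rw [← ofScalars_sum_eq_tsum_mul_pow]
  exact ((ofScalars 𝕜 a).hasFPowerSeriesOnBall (pos_of_gt hz)).analyticAt_of_mem
    (by simpa using hz) |>.differentiableAt

theorem hasSum_deriv_tsum_mul_pow_of_lt_radius (hz : ‖z‖ₑ < (ofScalars 𝕜 a).radius) :
    HasSum (fun n => (n + 1) * a (n + 1) * z ^ n) (deriv (fun w => ∑' n, a n * w ^ n) z) := by
  have h := ((ofScalars 𝕜 a).hasFPowerSeriesOnBall (pos_of_gt hz)).fderiv.hasSum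
    (y := z) (by simpa using hz) |>.mapL (ContinuousLinearMap.apply 𝕜 𝕜 1)
  rw [ofScalars_sum_eq_tsum_mul_pow, zero_add] at h
  have hterm (n : ℕ) : ContinuousLinearMap.apply 𝕜 𝕜 1 ((ofScalars 𝕜 a).derivSeries n fun _ => z)
      = (n + 1) * a (n + 1) * z ^ n := by
    simp only [ContinuousLinearMap.apply_apply, apply_eq_pow_smul_coeff, _root_.smul_apply,
      derivSeries_coeff_one, coeff_ofScalars, nsmul_eq_mul, Nat.cast_add, Nat.cast_one,
      smul_eq_mul]
    ring
  simp only [hterm] at h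
  exact h

end FormalMultilinearSeries

theorem abs_le_pow_of_abs_le_mul_add {a : ℕ → ℝ} {c : ℝ} (hc : 0 ≤ c) (h0 : |a 0| ≤ 1)
    (h1 : |a 1| ≤ 1 + c) (h : ∀ n, |a (n + 2)| ≤ c * |a (n + 1)| + |a n|) (n : ℕ) :
    |a n| ≤ (1 + c) ^ n := by
  induction n using Nat.twoStepInduction with
  | zero => simpa using h0
  | one => simpa using h1
  | more n ih₀ ih₁ =>
    calc |a (n + 2)| ≤ c * (1 + c) ^ (n + 1) + (1 + c) ^ n := (h n).trans (by gcongr)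
      _ ≤ c * (1 + c) ^ (n + 1) + (1 + c) ^ (n + 1) := by
        gcongr
        · exact le_add_of_nonneg_right hc
        · omega
      _ = (1 + c) ^ (n + 2) := by ring

theorem ode_of_hasSum_of_recurrence {𝕜 : Type*} [NormedField 𝕜] {a : ℕ → 𝕜} {θ z F D : 𝕜}
    (h1 : a 1 = θ * a 0) (hrec : ∀ n : ℕ, (n + 2) * a (n + 2) = θ * a (n + 1) - (n + 2) * a n)
    (hF : HasSum (fun n => a n * z ^ n) F) (hD : HasSum (fun n => (n + 1) * a (n + 1) * z ^ n) D) :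
    (1 + z ^ 2) * D + (2 * z - θ) * F = 0 := by
  have hD₁ : HasSum (fun n => (n + 2) * a (n + 2) * z ^ (n + 1)) (D - θ * a 0) := by
    have h := (hasSum_nat_add_iff' 1).mpr hD
    simp only [Finset.sum_range_one, Nat.cast_zero, zero_add, one_mul, pow_zero, mul_one, h1] at h
    refine h.congr_fun fun n => ?_
    push_cast
    ring
  have hF₁ : HasSum (fun n => a (n + 1) * z ^ (n + 1)) (F - a 0) := by
    simpa using (hasSum_nat_add_iff' 1).mpr hF
  have hzD : HasSum (fun n => n * a n * z ^ n) (z * D) := by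
    have h := HasSum.zero_add (f := fun n => (n : 𝕜) * a n * z ^ n)
      ((hD.mul_left z).congr_fun fun n => by push_cast; ring)
    simpa using h
  have hrhs := (hF₁.mul_left θ).sub ((hzD.add (hF.mul_left 2)).mul_left z)
  have key : D - θ * a 0 = θ * (F - a 0) - z * (z * D + 2 * F) := by
    refine hD₁.unique (hrhs.congr_fun fun n => ?_)
    linear_combination (z ^ (n + 1)) * hrec n
  linear_combination key

/-- Remark 4.2: the generating function `f(z) = ∑ p_j(θ) zʲ` of the sequence
defined by `p₀ = 1`, `p₁ = θ`, `p_{n+1} = (θ/(n+1)) p_n - p_{n-1}` satisfies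
`(1+z²)f'(z) + (2z-θ)f(z) = 0`, `f(0) = 1`, on a neighbourhood of `0`. -/
theorem generating_function_ode
    (θ : ℝ) (p : ℕ → ℝ)
    (hp0 : p 0 = 1) (hp1 : p 1 = θ)
    (hrec : ∀ n : ℕ, 1 ≤ n → p (n + 1) = θ / ((n : ℝ) + 1) * p n - p (n - 1))
    (f : ℝ → ℝ) (hf : ∀ z : ℝ, f z = ∑' j : ℕ, p j * z ^ j) :
    f 0 = 1 ∧
    ∃ ε > (0 : ℝ), ∀ z : ℝ, |z| < ε →
      DifferentiableAt ℝ f z ∧ (1 + z ^ 2) * deriv f z + (2 * z - θ) * f z = 0 := by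
  have hrec₂ (n : ℕ) : p (n + 2) = θ / ((n : ℝ) + 2) * p (n + 1) - p n := by
    rw [hrec (n + 1) (by omega)]
    push_cast
    ring
  have hbound : ∀ n, |p n| ≤ (1 + |θ|) ^ n := by
    refine abs_le_pow_of_abs_le_mul_add (abs_nonneg θ) (by simp [hp0]) (by simp [hp1]) fun n => ?_
    calc |p (n + 2)| ≤ |θ / ((n : ℝ) + 2)| * |p (n + 1)| + |p n| := by
          rw [hrec₂, ← abs_mul]
          exact abs_sub _ _
      _ ≤ |θ| * |p (n + 1)| + |p n| := by
          gcongr ?_ * _ + _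
          rw [abs_div]
          exact div_le_self (abs_nonneg θ) (by rw [abs_of_pos (by positivity)]; linarith)
  obtain rfl : f = fun z => ∑' j : ℕ, p j * z ^ j := funext hf
  refine ⟨?_, (1 + |θ|)⁻¹, by positivity, fun z hz => ?_⟩
  · dsimp only
    rw [tsum_eq_single 0 fun n hn => by simp [hn]]
    simp [hp0]
  have hz' := enorm_lt_ofScalars_radius_of_norm_le_pow (𝕜 := ℝ) (B := 1 + |θ|)
    (by positivity) hbound hz
  refine ⟨differentiableAt_tsum_mul_pow_of_lt_radius hz',
    ode_of_hasSum_of_recurrence (by rw [hp0, hp1, mul_one]) (fun n => ?_)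
      (hasSum_mul_pow_of_lt_radius hz') (hasSum_deriv_tsum_mul_pow_of_lt_radius hz')⟩
  rw [hrec₂]
  field_simp
end

section
/- Let $\theta\ne 0$ be real, $T(j)=\begin{pmatrix}\theta/(j+1)&-1\\1&0\end{pmatrix}$, and $B(j)=T(4j)T(4j-1)T(4j-2)T(4j-3)$. Then there is a constant $c(\theta)$ such that $\|B(j)-I+\frac{\theta}{2j}J\|\le c(\theta)/j^2$ for all $j\ge 1$, where $J=\begin{pmatrix}0&-1\\1&0\end{pmatrix}$. -/
/-!
Write `T(4j - i) = J + sᵢ E` with `E = !![1, 0; 0, 0]` and `sᵢ = θ/(4j + 1 - i)`, so that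
`‖sᵢ E‖ ≤ ε := |θ|/j`. Expanding a product of four perturbations of `J` gives `J⁴ = I`, a part
linear in the perturbations, and a remainder of norm at most `(1 + ε)⁴ - 1 - 4ε = O(ε²)`.
Because `J² = -I` the linear part is `!![0, s₀ + s₂; -(s₁ + s₃), 0]`, and both `s₀ + s₂` and
`s₁ + s₃` equal `θ/(2j) + O(1/j²)`, which produces the term `-(θ/2j) J`.
-/

open Matrix

attribute [local instance] Matrix.linftyOpNormedRing Matrix.linftyOpNormedAlgebra

section Perturbation

variable {R : Type*} [NormedRing R] (J : R) (A : ℕ → R)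

def perturbedProd : ℕ → R
  | 0 => 1
  | n + 1 => perturbedProd n * (J + A n)

/-- The part of `perturbedProd J A n` that is linear in the `A i`, namely
`∑ i < n, J ^ i * A i * J ^ (n - 1 - i)`. -/
def linearPart : ℕ → R
  | 0 => 0
  | n + 1 => linearPart n * J + J ^ n * A n

variable {J A} {ε : ℝ}

theorem norm_pow_mul_le (hJ : ‖J‖ ≤ 1) (X : R) (n : ℕ) : ‖J ^ n * X‖ ≤ ‖X‖ := by
  induction n with
  | zero => simp
  | succ n ih =>
    calc ‖J ^ (n + 1) * X‖ = ‖J * (J ^ n * X)‖ := by rw [pow_succ', mul_assoc]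
      _ ≤ ‖J‖ * ‖J ^ n * X‖ := norm_mul_le _ _
      _ ≤ ‖J ^ n * X‖ := mul_le_of_le_one_left (norm_nonneg _) hJ
      _ ≤ ‖X‖ := ih

theorem norm_linearPart_le (hJ : ‖J‖ ≤ 1) {n : ℕ} (hA : ∀ i < n, ‖A i‖ ≤ ε) :
    ‖linearPart J A n‖ ≤ n * ε := by
  induction n with
  | zero => simp [linearPart]
  | succ n ih =>
    calc ‖linearPart J A n * J + J ^ n * A n‖
        ≤ ‖linearPart J A n‖ * ‖J‖ + ‖A n‖ :=
          norm_add_le_of_le (norm_mul_le _ _) (norm_pow_mul_le hJ _ _)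
      _ ≤ n * ε + ε :=
          add_le_add ((mul_le_of_le_one_right (norm_nonneg _) hJ).trans
            (ih fun i hi => hA i (by omega))) (hA n (by omega))
      _ = (n + 1 : ℕ) * ε := by push_cast; ring

theorem norm_perturbedProd_sub_le (hJ : ‖J‖ ≤ 1) {n : ℕ}
    (hA : ∀ i < n, ‖A i‖ ≤ ε) :
    ‖perturbedProd J A n - J ^ n - linearPart J A n‖ ≤ (1 + ε) ^ n - 1 - n * ε := by
  induction n with
  | zero => simp [perturbedProd, linearPart]
  | succ n ih =>
    have hA' : ∀ i < n, ‖A i‖ ≤ ε := fun i hi => hA i (by omega)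
    have hstep : perturbedProd J A (n + 1) - J ^ (n + 1) - linearPart J A (n + 1)
        = (perturbedProd J A n - J ^ n - linearPart J A n) * (J + A n)
          + linearPart J A n * A n := by
      simp only [perturbedProd, linearPart, pow_succ]; noncomm_ring
    rw [hstep]
    calc _ ≤ ((1 + ε) ^ n - 1 - n * ε) * (1 + ε) + n * ε * ε :=
          norm_add_le_of_le
            (norm_mul_le_of_le (ih hA') (norm_add_le_of_le hJ (hA n (by omega))))
            (norm_mul_le_of_le (norm_linearPart_le hJ hA') (hA n (by omega)))
      _ = (1 + ε) ^ (n + 1) - 1 - (n + 1 : ℕ) * ε := by push_cast; ring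

end Perturbation

theorem norm_fin_two (a b c d : ℝ) : ‖!![a, b; c, d]‖ = max (|a| + |b|) (|c| + |d|) := by
  rw [linfty_opNorm_def]
  simp [Fin.sum_univ_two, Finset.sup_def]

theorem fin_two_J_pow_four : !![(0 : ℝ), -1; 1, 0] ^ 4 = 1 := by
  ext a b
  fin_cases a <;> fin_cases b <;> simp [pow_succ]

theorem fin_two_eq_J_add_smul (a : ℝ) :
    !![a, -1; 1, 0] = !![0, -1; 1, 0] + a • !![1, 0; 0, 0] := by
  ext i k
  fin_cases i <;> fin_cases k <;> simp

theorem norm_div_smul_E_le (θ : ℝ) {x y : ℝ} (hx : 1 ≤ x) (hy : y ≤ 3) :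
    ‖(θ / (4 * x + 1 - y)) • !![(1 : ℝ), 0; 0, 0]‖ ≤ |θ| / x := by
  rw [norm_smul, norm_fin_two, Real.norm_eq_abs, abs_div,
    abs_of_pos (a := 4 * x + 1 - y) (by linarith)]
  norm_num
  gcongr
  linarith

theorem linearPart_four_smul (s : ℕ → ℝ) :
    linearPart !![0, -1; 1, 0] (fun i => s i • !![1, 0; 0, 0]) 4
      = !![0, s 0 + s 2; -(s 1 + s 3), 0] := by
  ext i k
  fin_cases i <;> fin_cases k <;>
    simp [linearPart, pow_succ] <;> ring

theorem abs_div_add_div_sub_div_le_odd (θ : ℝ) {x : ℝ} (hx : 1 ≤ x) :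
    |θ / (4 * x + 1) + θ / (4 * x - 1) - θ / (2 * x)| ≤ |θ| / x ^ 2 := by
  have hx₀ : 0 < x := by linarith
  have hx₁ : 0 < 4 * x - 1 := by linarith
  have hx₂ : 0 < 16 * x ^ 2 - 1 := by nlinarith
  have hden : x ^ 2 ≤ 2 * x * (16 * x ^ 2 - 1) := by nlinarith
  have hid : θ / (4 * x + 1) + θ / (4 * x - 1) - θ / (2 * x)
      = θ / (2 * x * (16 * x ^ 2 - 1)) := by
    rw [eq_div_iff (by positivity)]
    field_simp
    ring
  rw [hid, abs_div, abs_of_pos (a := 2 * x * _) (by positivity)]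
  gcongr

theorem abs_div_add_div_sub_div_le_even (θ : ℝ) {x : ℝ} (hx : 1 ≤ x) :
    |θ / (4 * x) + θ / (4 * x - 2) - θ / (2 * x)| ≤ |θ| / x ^ 2 := by
  have hx₀ : 0 < x := by linarith
  have hx₂ : 0 < 4 * x - 2 := by linarith
  have hden : x ^ 2 ≤ 2 * x * (4 * x - 2) := by nlinarith
  have hid : θ / (4 * x) + θ / (4 * x - 2) - θ / (2 * x) = θ / (2 * x * (4 * x - 2)) := by
    field_simp
    ring
  rw [hid, abs_div, abs_of_pos (a := 2 * x * _) (by positivity)]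
  gcongr

theorem norm_linearPart_four_add_smul_le (θ : ℝ) {x : ℝ} (hx : 1 ≤ x) :
    ‖linearPart !![(0 : ℝ), -1; 1, 0] (fun i => (θ / (4 * x + 1 - i)) • !![1, 0; 0, 0]) 4
      + (θ / (2 * x)) • !![0, -1; 1, 0]‖ ≤ 2 * (|θ| / x ^ 2) := by
  have hentries :
      linearPart !![(0 : ℝ), -1; 1, 0] (fun i => (θ / (4 * x + 1 - i)) • !![1, 0; 0, 0]) 4
        + (θ / (2 * x)) • !![0, -1; 1, 0]
      = !![0, θ / (4 * x + 1) + θ / (4 * x - 1) - θ / (2 * x);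
          -(θ / (4 * x) + θ / (4 * x - 2) - θ / (2 * x)), 0] := by
    rw [linearPart_four_smul]
    ext a b
    fin_cases a <;> fin_cases b <;> simp <;> ring_nf
  rw [hentries, norm_fin_two]
  simp only [abs_zero, zero_add, add_zero, abs_neg]
  have hodd := abs_div_add_div_sub_div_le_odd θ hx
  have heven := abs_div_add_div_sub_div_le_even θ hx
  have : 0 ≤ |θ| / x ^ 2 := by positivity
  exact max_le (by linarith) (by linarith)

theorem one_add_div_pow_four_sub_add_le {t x : ℝ} (ht : 0 ≤ t) (hx : 1 ≤ x) :
    (1 + t / x) ^ 4 - 1 - 4 * (t / x) + 2 * (t / x ^ 2) ≤ (1 + t) ^ 4 / x ^ 2 := by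
  have hx₀ : 0 < x := by linarith
  have hε : t / x ≤ t := div_le_self ht hx
  have hε₀ : 0 ≤ t / x := by positivity
  calc (1 + t / x) ^ 4 - 1 - 4 * (t / x) + 2 * (t / x ^ 2)
      = (t ^ 2 * (6 + 4 * (t / x) + (t / x) ^ 2) + 2 * t) / x ^ 2 := by
        field_simp
        ring
    _ ≤ (t ^ 2 * (6 + 4 * t + t ^ 2) + 2 * t) / x ^ 2 := by gcongr
    _ ≤ (1 + t) ^ 4 / x ^ 2 := by gcongr; nlinarith [pow_nonneg ht 3]

theorem four_step_product_estimate_general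
    (θ : ℝ)
    (T : ℕ → Matrix (Fin 2) (Fin 2) ℝ)
    (hT : ∀ j, T j = !![θ / ((j : ℝ) + 1), -1; 1, 0])
    (J : Matrix (Fin 2) (Fin 2) ℝ) (hJ : J = !![0, -1; 1, 0])
    (B : ℕ → Matrix (Fin 2) (Fin 2) ℝ)
    (hB : ∀ j, 1 ≤ j → B j = T (4 * j) * T (4 * j - 1) * T (4 * j - 2) * T (4 * j - 3)) :
    ∃ c : ℝ, ∀ j : ℕ, 1 ≤ j →
      ‖B j - 1 + (θ / (2 * (j : ℝ))) • J‖ ≤ c / (j : ℝ) ^ 2 := by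
  refine ⟨(1 + |θ|) ^ 4, fun j hj => ?_⟩
  subst hJ
  have hx : (1 : ℝ) ≤ j := by exact_mod_cast hj
  set A : ℕ → Matrix (Fin 2) (Fin 2) ℝ := fun i => (θ / (4 * (j : ℝ) + 1 - i)) • !![1, 0; 0, 0]
  have hTA : ∀ i ≤ 3, T (4 * j - i) = !![0, -1; 1, 0] + A i := fun i hi => by
    rw [hT, fin_two_eq_J_add_smul, Nat.cast_sub (by omega)]
    push_cast
    congr 3
    ring
  have hBA : B j = perturbedProd !![0, -1; 1, 0] A 4 := by
    rw [hB j hj, show T (4 * j) = _ from hTA 0 (by norm_num), hTA 1 (by norm_num),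
      hTA 2 (by norm_num), hTA 3 (by norm_num)]
    simp only [perturbedProd, one_mul]
  have hA : ∀ i < 4, ‖A i‖ ≤ |θ| / j := fun i hi =>
    norm_div_smul_E_le θ hx (by exact_mod_cast Nat.le_of_lt_succ hi)
  calc ‖B j - 1 + (θ / (2 * (j : ℝ))) • !![0, -1; 1, 0]‖
      = ‖(perturbedProd !![0, -1; 1, 0] A 4 - !![0, -1; 1, 0] ^ 4
            - linearPart !![0, -1; 1, 0] A 4)
          + (linearPart !![0, -1; 1, 0] A 4 + (θ / (2 * (j : ℝ))) • !![0, -1; 1, 0])‖ := by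
        rw [hBA, fin_two_J_pow_four]
        congr 1
        abel
    _ ≤ ((1 + |θ| / j) ^ 4 - 1 - 4 * (|θ| / j)) + 2 * (|θ| / j ^ 2) :=
        norm_add_le_of_le (by simpa using norm_perturbedProd_sub_le (by simp [norm_fin_two]) hA)
          (norm_linearPart_four_add_smul_le θ hx)
    _ ≤ (1 + |θ|) ^ 4 / j ^ 2 := one_add_div_pow_four_sub_add_le (abs_nonneg θ) hx

/-- Estimate (4.5): the four-step products
`B(j) = T(4j)T(4j-1)T(4j-2)T(4j-3)` satisfy
`B(j) = I - (θ/2j) J + O(1/j²)`. -/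
theorem four_step_product_estimate
    (θ : ℝ) (hθ : θ ≠ 0)
    (T : ℕ → Matrix (Fin 2) (Fin 2) ℝ)
    (hT : ∀ j, T j = !![θ / ((j : ℝ) + 1), -1; 1, 0])
    (J : Matrix (Fin 2) (Fin 2) ℝ) (hJ : J = !![0, -1; 1, 0])
    (B : ℕ → Matrix (Fin 2) (Fin 2) ℝ)
    (hB : ∀ j, 1 ≤ j → B j = T (4 * j) * T (4 * j - 1) * T (4 * j - 2) * T (4 * j - 3)) :
    ∃ c : ℝ, ∀ j : ℕ, 1 ≤ j →
      ‖B j - 1 + (θ / (2 * (j : ℝ))) • J‖ ≤ c / (j : ℝ) ^ 2 :=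
  four_step_product_estimate_general θ T hT J hJ B hB
end

section
/- Let $\beta\ne0$ and let $(b_n)_{n\in\mathbb{Z}}$ be real with $\sum_n n^4 b_n^2<\infty$ and satisfying $2(-n^2+\alpha)b_n+\beta b_{n+1}+\beta b_{n-1}=0$. Then for all $m\ne n$ in $\mathbb{N}$, $\frac{b_{m-1}b_n-b_{n-1}b_m}{m-n}=\frac{2}{\beta}\sum_{k=0}^\infty \big((m+k)+(n+k)\big)\,b_{m+k}\,b_{n+k}$, i.e. the Tracy–Widom kernel equals $(2/\beta)(\Gamma_u\Gamma_v+\Gamma_v\Gamma_u)(m,n)$ where $\Gamma_u=[b_{j+k-1}]$ and $\Gamma_v=[(j+k-1)b_{j+k-1}]$. -/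
/-!
Write `W(p, q) = b (p - 1) b q - b (q - 1) b p` for the Casoratian of the recurrence at the
pair `(p, q)`. Subtracting `b p` times the recurrence at `q` from `b q` times the one at `p`
gives `β (W(p, q) - W(p + 1, q + 1)) = 2 (p - q)(p + q) b p b q`, so along the diagonal
`(m + k, n + k)` the series on the right telescopes to `β W(m, n) / (2 (m - n))`, the tail
`W(m + k, n + k)` tending to zero because `b` does. The weight `∑ n⁴ b n²` makes both `b` and
`n b n` square summable, hence the series absolutely convergent.
-/

open Filter Topology

theorem tsum_sub_succ_eq_of_tendsto_zero {G : Type*} [AddCommGroup G] [TopologicalSpace G]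
    [IsTopologicalAddGroup G] [T2Space G] {F : ℕ → G}
    (hs : Summable fun k => F k - F (k + 1)) (hF : Tendsto F atTop (𝓝 0)) :
    ∑' k, (F k - F (k + 1)) = F 0 :=
  tendsto_nhds_unique hs.hasSum.tendsto_sum_nat <| by
    simpa only [Finset.sum_range_sub', sub_zero] using tendsto_const_nhds.sub hF

theorem summable_mul_of_summable_sq_s17 {ι : Type*} {u v : ι → ℝ}
    (hu : Summable fun i => u i ^ 2) (hv : Summable fun i => v i ^ 2) :
    Summable fun i => u i * v i :=
  (hu.add hv).of_norm_bounded fun i => by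
    rw [Real.norm_eq_abs, abs_mul, ← sq_abs (u i), ← sq_abs (v i)]
    nlinarith [two_mul_le_add_sq |u i| |v i|, abs_nonneg (u i), abs_nonneg (v i)]

theorem tendsto_cofinite_zero_of_summable_sq {ι : Type*} {u : ι → ℝ}
    (hu : Summable fun i => u i ^ 2) : Tendsto u cofinite (𝓝 0) := by
  have h := (Real.continuous_sqrt.tendsto 0).comp hu.tendsto_cofinite_zero
  simp only [Function.comp_def, Real.sqrt_sq_eq_abs, Real.sqrt_zero] at h
  exact tendsto_zero_iff_abs_tendsto_zero u |>.mpr h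

theorem Int.summable_sq_pow_mul_of_le {g : ℤ → ℝ} (hg : ∀ n, 0 ≤ g n) {i l : ℕ} (hil : i ≤ l)
    (h : Summable fun n : ℤ => ((n : ℝ) ^ 2) ^ l * g n) :
    Summable fun n : ℤ => ((n : ℝ) ^ 2) ^ i * g n := by
  refine h.of_norm_bounded_eventually <| (eventually_cofinite_ne 0).mono fun n hn => ?_
  have hn2 : (1 : ℝ) ≤ (n : ℝ) ^ 2 := by
    rw [one_le_sq_iff_one_le_abs, ← Int.cast_abs]
    exact_mod_cast Int.one_le_abs hn
  rw [Real.norm_of_nonneg (by have := hg n; positivity)]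
  exact mul_le_mul_of_nonneg_right (pow_le_pow_right₀ hn2 hil) (hg n)

theorem Int.summable_comp_add_natCast {g : ℤ → ℝ} (hg : Summable g) (c : ℤ) :
    Summable fun k : ℕ => g (c + k) :=
  hg.comp_injective ((add_right_injective c).comp Nat.cast_injective)

theorem Int.tendsto_comp_add_natCast {α : Type*} {g : ℤ → α} {l : Filter α}
    (hg : Tendsto g cofinite l) (c : ℤ) : Tendsto (fun k : ℕ => g (c + k)) atTop l :=
  Nat.cofinite_eq_atTop ▸ hg.comp ((add_right_injective c).comp Nat.cast_injective).tendsto_cofinite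

def casoratian (b : ℤ → ℝ) (p q : ℤ) : ℝ :=
  b (p - 1) * b q - b (q - 1) * b p

theorem casoratian_sub_casoratian_add_one {α β : ℝ} {b : ℤ → ℝ}
    (hrec : ∀ n : ℤ, 2 * (-(n : ℝ) ^ 2 + α) * b n + β * b (n + 1) + β * b (n - 1) = 0)
    (p q : ℤ) :
    β * (casoratian b p q - casoratian b (p + 1) (q + 1)) =
      2 * ((p : ℝ) - q) * ((p + q) * b p * b q) := by
  simp only [casoratian, add_sub_cancel_right]
  linear_combination b q * hrec p - b p * hrec q

theorem tendsto_casoratian_add_natCast {b : ℤ → ℝ} (hb : Tendsto b cofinite (𝓝 0)) (m n : ℤ) :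
    Tendsto (fun k : ℕ => casoratian b (m + k) (n + k)) atTop (𝓝 0) := by
  have h := ((Int.tendsto_comp_add_natCast hb (m - 1)).mul (Int.tendsto_comp_add_natCast hb n)).sub
    ((Int.tendsto_comp_add_natCast hb (n - 1)).mul (Int.tendsto_comp_add_natCast hb m))
  simpa only [casoratian, sub_add_eq_add_sub, mul_zero, sub_zero] using h

theorem summable_add_mul_mul_add_natCast {b : ℤ → ℝ} (hb : Summable fun j : ℤ => b j ^ 2)
    (hjb : Summable fun j : ℤ => ((j : ℝ) * b j) ^ 2) (m n : ℤ) :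
    Summable fun k : ℕ => (((m : ℝ) + k) + ((n : ℝ) + k)) * b (m + k) * b (n + k) := by
  have h := (summable_mul_of_summable_sq_s17 (Int.summable_comp_add_natCast hjb m)
    (Int.summable_comp_add_natCast hb n)).add
    (summable_mul_of_summable_sq_s17 (Int.summable_comp_add_natCast hb m)
      (Int.summable_comp_add_natCast hjb n))
  refine h.congr fun k => ?_
  push_cast
  ring

/-- Theorem 5.1: the Tracy–Widom kernel built from the Fourier coefficients of
a Mathieu function equals `(2/β)(Γ_u Γ_v + Γ_v Γ_u)` entrywise. -/
theorem mathieu_kernel_eq_hankel_anticommutator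
    (α β : ℝ) (hβ : β ≠ 0) (b : ℤ → ℝ)
    (hsum : Summable (fun n : ℤ => (n : ℝ) ^ 4 * b n ^ 2))
    (hrec : ∀ n : ℤ, 2 * (-(n : ℝ) ^ 2 + α) * b n + β * b (n + 1) + β * b (n - 1) = 0) :
    ∀ m n : ℤ, 1 ≤ m → 1 ≤ n → m ≠ n →
      (b (m - 1) * b n - b (n - 1) * b m) / ((m : ℝ) - n) =
        (2 / β) * ∑' k : ℕ,
          (((m : ℝ) + k) + ((n : ℝ) + k)) * b (m + k) * b (n + k) := by
  intro m n _ _ hmn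
  have hmn' : (m : ℝ) - n ≠ 0 := sub_ne_zero.mpr (Int.cast_injective.ne hmn)
  have h4 : Summable fun j : ℤ => ((j : ℝ) ^ 2) ^ 2 * b j ^ 2 := by
    simpa only [← pow_mul] using hsum
  have hb : Summable fun j : ℤ => b j ^ 2 := by
    simpa using Int.summable_sq_pow_mul_of_le (fun j => sq_nonneg (b j)) (Nat.zero_le 2) h4
  have hjb : Summable fun j : ℤ => ((j : ℝ) * b j) ^ 2 := by
    simpa [mul_pow] using Int.summable_sq_pow_mul_of_le (fun j => sq_nonneg (b j)) one_le_two h4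
  have hterm : ∀ k : ℕ,
      β * casoratian b (m + k) (n + k) - β * casoratian b (m + (k + 1 : ℕ)) (n + (k + 1 : ℕ)) =
        2 * ((m : ℝ) - n) * ((((m : ℝ) + k) + ((n : ℝ) + k)) * b (m + k) * b (n + k)) := by
    intro k
    rw [← mul_sub, Nat.cast_succ, ← add_assoc, ← add_assoc,
      casoratian_sub_casoratian_add_one hrec]
    push_cast
    ring
  have htel := tsum_sub_succ_eq_of_tendsto_zero
    (F := fun k : ℕ => β * casoratian b (m + k) (n + k))
    (by simpa only [hterm] using (summable_add_mul_mul_add_natCast hb hjb m n).mul_left _)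
    (by simpa using
      (tendsto_casoratian_add_natCast (tendsto_cofinite_zero_of_summable_sq hb) m n).const_mul β)
  rw [tsum_congr hterm, tsum_mul_left] at htel
  simp only [casoratian, Nat.cast_zero, add_zero] at htel
  rw [div_eq_iff hmn']
  field_simp
  linear_combination -htel
end
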